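/- arXiv:2403.00130 — 7 statements merged into one kernel-verified Lean document; each statement's English description precedes it below -/
import Mathlib

section
/- For positive integers $n,k$, permutations $\sigma \in \Sigma_n$ and $\tau \in \Sigma_k$, and $a \le b$, the product of permuted simplexes satisfies $\Delta_{a,b}^n\sigma \times \Delta_{a,b}^k\tau = \bigcup_{\rho \in \mathrm{Sh}(n,k)} \Delta_{a,b}^{n+k}((\sigma * \tau)\circ\rho^{-1})$, where the union is disjoint up to sets of Lebesgue measure zero. -/
open MeasureTheory

/-- The simplex `Δ_{a,b}^n`. -/
def simplex (a b : ℝ) (n : ℕ) : Set (Fin n → ℝ) :=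
  {r | (∀ i, a ≤ r i ∧ r i ≤ b) ∧ ∀ i j : Fin n, i ≤ j → r i ≤ r j}

/-- The permuted simplex `Δ_{a,b}^n σ = {r : a ≤ r (σ 0) ≤ ⋯ ≤ r (σ (n-1)) ≤ b}`. -/
def permSimplex (a b : ℝ) (n : ℕ) (σ : Equiv.Perm (Fin n)) : Set (Fin n → ℝ) :=
  {r | (fun i => r (σ i)) ∈ simplex a b n}

/-- `ρ` is an `(n,k)`-shuffle: it is increasing on the first `n` and the last `k` indices. -/
def IsShuffle (n k : ℕ) (ρ : Equiv.Perm (Fin (n + k))) : Prop :=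
  ∀ i j : Fin (n + k), i < j → ((j : ℕ) < n ∨ n ≤ (i : ℕ)) → ρ i < ρ j

/-- The concatenation product `σ * τ` of two permutations: acts as `σ` on the first `n`
letters and as the shift of `τ` on the last `k` letters. -/
def concatPerm {n k : ℕ} (σ : Equiv.Perm (Fin n)) (τ : Equiv.Perm (Fin k)) :
    Equiv.Perm (Fin (n + k)) :=
  finSumFinEquiv.symm.trans ((Equiv.sumCongr σ τ).trans finSumFinEquiv)

/-- The product `Δ_{a,b}^n σ × Δ_{a,b}^k τ`, viewed in `ℝ^{n+k}` via concatenation. -/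
def prodPermSimplex (a b : ℝ) (n k : ℕ) (σ : Equiv.Perm (Fin n)) (τ : Equiv.Perm (Fin k)) :
    Set (Fin (n + k) → ℝ) :=
  {r | (fun i : Fin n => r (Fin.castAdd k i)) ∈ permSimplex a b n σ ∧
       (fun j : Fin k => r (Fin.natAdd n j)) ∈ permSimplex a b k τ}

/-!
Write `s = r ∘ (σ * τ)`. Then `r` lies in the product exactly when `s` is monotone on each of the
blocks `{0, …, n-1}` and `{n, …, n+k-1}`, and `r` lies in `Δ((σ * τ) ∘ ρ⁻¹)` exactly when `s ∘ ρ⁻¹`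
is monotone. A shuffle `ρ` preserves the order inside each block, so the second condition implies
the first. Conversely, if `s` is monotone on the blocks, the inverse of the stable sorting
permutation of `s` is a shuffle. Two distinct permutations can both sort `s` only if `s` has a
repeated value, so the pieces overlap inside the union of the hyperplanes `r p = r q`, a null set.
-/

namespace Tuple

variable {α : Type*} [LinearOrder α] {m : ℕ}

/-- Stability of `Tuple.sort`: entries that are already in order stay in order. -/
theorem sort_inv_lt_sort_inv_of_le (f : Fin m → α) {i j : Fin m} (hij : i < j)
    (hf : f i ≤ f j) : (sort f)⁻¹ i < (sort f)⁻¹ j := by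
  have hstable := (eq_sort_iff (f := f) (σ := sort f)).mp rfl |>.2
  by_contra! hle
  have hlt : (sort f)⁻¹ j < (sort f)⁻¹ i :=
    hle.lt_of_ne fun h => hij.ne' (by simpa using congrArg (sort f) h)
  have hfji : f j ≤ f i := by simpa using monotone_sort f hlt.le
  have := hstable _ _ hlt (by simpa using le_antisymm hfji hf)
  simp only [Equiv.Perm.coe_inv, Equiv.apply_symm_apply] at this
  exact this.not_gt hij

theorem eq_of_monotone_comp_of_injective {f : Fin m → α} (hf : Function.Injective f)
    {π π' : Equiv.Perm (Fin m)} (hπ : Monotone (f ∘ π)) (hπ' : Monotone (f ∘ π')) : π = π' :=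
  Equiv.ext fun i => hf (congrFun (unique_monotone hπ hπ') i)

end Tuple

section Hyperplanes

open Measure

variable {ι : Type*} [Fintype ι] (μ : Measure (ι → ℝ)) [IsAddHaarMeasure μ]

theorem addHaar_setOf_apply_eq_apply {p q : ι} (hpq : p ≠ q) : μ {r | r p = r q} = 0 := by
  classical
  let f : (ι → ℝ) →ₗ[ℝ] ℝ := LinearMap.proj (R := ℝ) (φ := fun _ : ι => ℝ) p - LinearMap.proj q
  have hker : {r : ι → ℝ | r p = r q} = LinearMap.ker f := by
    ext r
    simp [f, sub_eq_zero]
  rw [hker]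
  refine addHaar_submodule μ _ fun htop => ?_
  have : Pi.single p (1 : ℝ) ∈ LinearMap.ker f := htop ▸ Submodule.mem_top
  simp [f, hpq] at this

theorem addHaar_setOf_not_injective : μ {r : ι → ℝ | ¬ Function.Injective r} = 0 := by
  have hsub : {r : ι → ℝ | ¬ Function.Injective r} ⊆
      ⋃ pq : {pq : ι × ι // pq.1 ≠ pq.2}, {r | r pq.1.1 = r pq.1.2} := by
    intro r hr
    obtain ⟨p, q, hrpq, hpq⟩ := Function.not_injective_iff.mp hr
    exact Set.mem_iUnion.mpr ⟨⟨(p, q), hpq⟩, hrpq⟩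
  exact measure_mono_null hsub <| measure_iUnion_null fun pq => addHaar_setOf_apply_eq_apply μ pq.2

end Hyperplanes

section Shuffles

variable {a b : ℝ} {n k : ℕ}

lemma concatPerm_castAdd (σ : Equiv.Perm (Fin n)) (τ : Equiv.Perm (Fin k)) (i : Fin n) :
    concatPerm σ τ (Fin.castAdd k i) = Fin.castAdd k (σ i) := by
  simp [concatPerm]

lemma concatPerm_natAdd (σ : Equiv.Perm (Fin n)) (τ : Equiv.Perm (Fin k)) (j : Fin k) :
    concatPerm σ τ (Fin.natAdd n j) = Fin.natAdd n (τ j) := by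
  simp [concatPerm]

lemma mem_permSimplex {m : ℕ} {π : Equiv.Perm (Fin m)} {r : Fin m → ℝ} :
    r ∈ permSimplex a b m π ↔ (∀ i, a ≤ r i ∧ r i ≤ b) ∧ Monotone (r ∘ π) :=
  ⟨fun ⟨hbd, hmono⟩ => ⟨fun i => by simpa using hbd (π.symm i), fun i j => hmono i j⟩,
    fun ⟨hbd, hmono⟩ => ⟨fun i => hbd (π i), fun i j => @hmono i j⟩⟩

lemma monotone_castAdd_and_natAdd_iff {β : Type*} [Preorder β] {f : Fin (n + k) → β} :
    Monotone (f ∘ Fin.castAdd k) ∧ Monotone (f ∘ Fin.natAdd n) ↔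
      ∀ i j : Fin (n + k), i < j → ((j : ℕ) < n ∨ n ≤ (i : ℕ)) → f i ≤ f j := by
  constructor
  · rintro ⟨hleft, hright⟩ i j hij (hj | hi)
    · exact hleft (show (⟨i, by omega⟩ : Fin n) ≤ ⟨j, hj⟩ from hij.le)
    · have := hright (show (⟨i - n, by omega⟩ : Fin k) ≤ ⟨j - n, by omega⟩ from
        Fin.mk_le_mk.mpr (by omega))
      simpa [Function.comp_def, Fin.natAdd_mk, Nat.add_sub_cancel' hi,
        Nat.add_sub_cancel' (hi.trans hij.le)] using this
  · intro h
    refine ⟨fun i j hij => ?_, fun i j hij => ?_⟩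
    · rcases hij.eq_or_lt with rfl | hlt
      · rfl
      · exact h _ _ (Fin.strictMono_castAdd k hlt) (Or.inl j.isLt)
    · rcases hij.eq_or_lt with rfl | hlt
      · rfl
      · exact h _ _ (Fin.strictMono_natAdd n hlt) (Or.inr (Nat.le_add_right n i))

lemma mem_prodPermSimplex {σ : Equiv.Perm (Fin n)} {τ : Equiv.Perm (Fin k)}
    {r : Fin (n + k) → ℝ} :
    r ∈ prodPermSimplex a b n k σ τ ↔ (∀ i, a ≤ r i ∧ r i ≤ b) ∧
      ∀ i j : Fin (n + k), i < j → ((j : ℕ) < n ∨ n ≤ (i : ℕ)) →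
        r (concatPerm σ τ i) ≤ r (concatPerm σ τ j) := by
  simp only [prodPermSimplex, Set.mem_ofPred_eq, mem_permSimplex,
    ← monotone_castAdd_and_natAdd_iff, Function.comp_def, concatPerm_castAdd,
    concatPerm_natAdd]
  exact ⟨fun ⟨⟨hl, hml⟩, hr, hmr⟩ => ⟨Fin.addCases hl hr, hml, hmr⟩,
    fun ⟨hbd, hml, hmr⟩ => ⟨⟨fun i => hbd _, hml⟩, fun j => hbd _, hmr⟩⟩

lemma isShuffle_sort_inv {α : Type*} [LinearOrder α] {f : Fin (n + k) → α}
    (hf : ∀ i j : Fin (n + k), i < j → ((j : ℕ) < n ∨ n ≤ (i : ℕ)) → f i ≤ f j) :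
    IsShuffle n k (Tuple.sort f)⁻¹ :=
  fun i j hij hblock => Tuple.sort_inv_lt_sort_inv_of_le f hij (hf i j hij hblock)

lemma IsShuffle.le_of_monotone_comp_inv {β : Type*} [Preorder β]
    {ρ : Equiv.Perm (Fin (n + k))} (hρ : IsShuffle n k ρ) {f : Fin (n + k) → β}
    (hf : Monotone (f ∘ ⇑ρ⁻¹)) {i j : Fin (n + k)} (hij : i < j)
    (hblock : (j : ℕ) < n ∨ n ≤ (i : ℕ)) : f i ≤ f j := by
  simpa using hf (hρ i j hij hblock).le

end Shuffles

theorem stmt1_general (a b : ℝ) (n k : ℕ)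
    (σ : Equiv.Perm (Fin n)) (τ : Equiv.Perm (Fin k)) :
    (prodPermSimplex a b n k σ τ =
      ⋃ ρ ∈ {ρ : Equiv.Perm (Fin (n + k)) | IsShuffle n k ρ},
        permSimplex a b (n + k) (concatPerm σ τ * ρ⁻¹)) ∧
    (∀ ρ ρ' : Equiv.Perm (Fin (n + k)), IsShuffle n k ρ → IsShuffle n k ρ' → ρ ≠ ρ' →
      volume (permSimplex a b (n + k) (concatPerm σ τ * ρ⁻¹) ∩
              permSimplex a b (n + k) (concatPerm σ τ * ρ'⁻¹)) = 0) := by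
  refine ⟨Set.ext fun r => ?_, fun ρ ρ' _ _ hne => ?_⟩
  · simp only [mem_prodPermSimplex, Set.mem_iUnion, Set.mem_ofPred_eq, exists_prop,
      mem_permSimplex, Equiv.Perm.coe_mul, ← Function.comp_assoc]
    constructor
    · rintro ⟨hbd, hblocks⟩
      exact ⟨_, isShuffle_sort_inv (f := r ∘ concatPerm σ τ) hblocks, hbd, Tuple.monotone_sort _⟩
    · rintro ⟨ρ, hρ, hbd, hmono⟩
      exact ⟨hbd, fun i j hij hblock => hρ.le_of_monotone_comp_inv hmono hij hblock⟩
  · refine measure_mono_null ?_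
      (addHaar_setOf_not_injective (volume : Measure (Fin (n + k) → ℝ)))
    rintro r ⟨hr, hr'⟩ hinj
    rw [mem_permSimplex, Equiv.Perm.coe_mul, ← Function.comp_assoc] at hr hr'
    exact hne <| inv_injective <| Tuple.eq_of_monotone_comp_of_injective
      (hinj.comp (concatPerm σ τ).injective) hr.2 hr'.2

/-- `Δ_{a,b}^n σ × Δ_{a,b}^k τ = ⋃_{ρ ∈ Sh(n,k)} Δ_{a,b}^{n+k} ((σ*τ) ∘ ρ⁻¹)`,
the union being disjoint up to Lebesgue measure zero. -/
theorem stmt1 (a b : ℝ) (hab : a ≤ b) (n k : ℕ) (hn : 0 < n) (hk : 0 < k)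
    (σ : Equiv.Perm (Fin n)) (τ : Equiv.Perm (Fin k)) :
    (prodPermSimplex a b n k σ τ =
      ⋃ ρ ∈ {ρ : Equiv.Perm (Fin (n + k)) | IsShuffle n k ρ},
        permSimplex a b (n + k) (concatPerm σ τ * ρ⁻¹)) ∧
    (∀ ρ ρ' : Equiv.Perm (Fin (n + k)), IsShuffle n k ρ → IsShuffle n k ρ' → ρ ≠ ρ' →
      volume (permSimplex a b (n + k) (concatPerm σ τ * ρ⁻¹) ∩
              permSimplex a b (n + k) (concatPerm σ τ * ρ'⁻¹)) = 0) :=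
  stmt1_general a b n k σ τ
end

section
/- Let $X : [0,T]^2 \to \mathbb{R}^d$ be the Hadamard product of two Lipschitz paths $x^1, x^2 : [0,T] \to \mathbb{R}^d$, i.e., $X^i_{t_1,t_2} = x^{1,i}_{t_1} x^{2,i}_{t_2}$ for each coordinate $i$. Assume $x^1, x^2$ are $C^1$. Then for every word $w = (i_1,\dots,i_n)$, the identity 2D signature factorizes: $\langle \mathbf{S}^{\mathrm{id}}_{\mathbf{s}\mathbf{t}}(X), w\rangle = \langle S_{s_1 t_1}(x^1), w\rangle \cdot \langle S_{s_2 t_2}(x^2), w\rangle$. -/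
/-!
The mixed derivative of `(a, b) ↦ f a * g b` is `f' a * g' b`, so the integrand of the identity
2D signature of a Hadamard product splits into a function of the first coordinates times a
function of the second ones; for the identity permutation the 2D simplex is the product of the
two 1D simplices, and Fubini factorizes the integral.
-/

open MeasureTheory

/-- The mixed partial derivative `∂²f/∂r₁∂r₂`. -/
noncomputable def d12 (f : ℝ × ℝ → ℝ) (p : ℝ × ℝ) : ℝ :=
  deriv (fun a => deriv (fun b => f (a, b)) p.2) p.1

/-- The 2D simplex `Δ^n_{[s,t]}`: `n`-tuples of points of the rectangle, increasing in
both coordinates (recorded as a pair of increasing coordinate sequences). -/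
def simplex2 (s1 t1 s2 t2 : ℝ) (n : ℕ) : Set ((Fin n → ℝ) × (Fin n → ℝ)) :=
  {p | p.1 ∈ simplex s1 t1 n ∧ p.2 ∈ simplex s2 t2 n}

/-- The full 2D signature coefficient
`⟨S_{s,t}(X), (w, ν)⟩ = ∫_{Δⁿ_{[s,t]}} ∏ᵢ ∂₁₂X^{wᵢ}(r₁ⁱ, r₂^{ν(i)})`. -/
noncomputable def sigFull {d : ℕ} (X : Fin d → ℝ × ℝ → ℝ) (s1 s2 t1 t2 : ℝ)
    {n : ℕ} (w : Fin n → Fin d) (ν : Equiv.Perm (Fin n)) : ℝ :=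
  ∫ p in simplex2 s1 t1 s2 t2 n, ∏ i, d12 (X (w i)) (p.1 i, p.2 (ν i))

/-- The 1D path signature coefficient
`⟨S_{s,t}(x), w⟩ = ∫_{s ≤ r¹ ≤ ⋯ ≤ rⁿ ≤ t} ẋ^{w₁}(r¹) ⋯ ẋ^{wₙ}(rⁿ)`. -/
noncomputable def sig1 {d : ℕ} (x : ℝ → Fin d → ℝ) (s t : ℝ)
    {n : ℕ} (w : Fin n → Fin d) : ℝ :=
  ∫ r in simplex s t n, ∏ i, deriv (fun u => x u (w i)) (r i)

theorem d12_fst_mul_snd (f g : ℝ → ℝ) (p : ℝ × ℝ) :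
    d12 (fun q => f q.1 * g q.2) p = deriv f p.1 * deriv g p.2 := by
  simp only [d12, deriv_const_mul_field', deriv_mul_const_field']

theorem simplex2_eq_prod (s1 t1 s2 t2 : ℝ) (n : ℕ) :
    simplex2 s1 t1 s2 t2 n = simplex s1 t1 n ×ˢ simplex s2 t2 n :=
  rfl

theorem stmt5_general {d : ℕ} (x1 x2 : ℝ → Fin d → ℝ)
    (s1 t1 s2 t2 : ℝ)
    {n : ℕ} (w : Fin n → Fin d) :
    sigFull (fun i p => x1 p.1 i * x2 p.2 i) s1 s2 t1 t2 w 1 =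
      sig1 x1 s1 t1 w * sig1 x2 s2 t2 w := by
  have integrand_eq : ∀ p : (Fin n → ℝ) × (Fin n → ℝ),
      ∏ i, d12 (fun q => x1 q.1 (w i) * x2 q.2 (w i)) (p.1 i, p.2 ((1 : Equiv.Perm (Fin n)) i))
        = (∏ i, deriv (fun u => x1 u (w i)) (p.1 i)) *
            ∏ i, deriv (fun u => x2 u (w i)) (p.2 i) := fun p => by
    rw [← Finset.prod_mul_distrib]
    exact Finset.prod_congr rfl fun i _ =>
      d12_fst_mul_snd (fun u => x1 u (w i)) (fun u => x2 u (w i)) _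
  simp only [sigFull, sig1, integrand_eq, simplex2_eq_prod]
  exact setIntegral_prod_mul (L := ℝ) (μ := volume) (ν := volume)
    (fun r : Fin n → ℝ => ∏ i, deriv (fun u => x1 u (w i)) (r i))
    (fun r : Fin n → ℝ => ∏ i, deriv (fun u => x2 u (w i)) (r i)) _ _

/-- for a Hadamard-product field `X^i(t₁,t₂) = x¹ⁱ(t₁) x²ⁱ(t₂)` of two `C¹`
paths, the identity 2D signature factorizes into the product of the 1D signatures. -/
theorem stmt5 {d : ℕ} (T : ℝ) (x1 x2 : ℝ → Fin d → ℝ)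
    (hx1 : ContDiff ℝ 1 x1) (hx2 : ContDiff ℝ 1 x2)
    (s1 t1 s2 t2 : ℝ) (hs1 : 0 ≤ s1) (h1 : s1 ≤ t1) (ht1 : t1 ≤ T)
    (hs2 : 0 ≤ s2) (h2 : s2 ≤ t2) (ht2 : t2 ≤ T)
    {n : ℕ} (w : Fin n → Fin d) :
    sigFull (fun i p => x1 p.1 i * x2 p.2 i) s1 s2 t1 t2 w 1 =
      sig1 x1 s1 t1 w * sig1 x2 s2 t2 w :=
  stmt5_general x1 x2 s1 t1 s2 t2 w
end

section
/- Let $X : [0,T]^2 \to \mathbb{R}^d$ be $C^2$ and let $\phi(t_1,t_2) = (\phi_1(t_1), \phi_2(t_2))$ be a stretching, i.e., $\phi_1, \phi_2 : [0,T] \to [0,T]$ are $C^1$ monotone nondecreasing with $\phi_i(0)=0$, $\phi_i(T)=T$. Then the full 2D signature of the stretched field $X^\phi = X \circ \phi$ satisfies $\langle \mathbf{S}_{\mathbf{s}\mathbf{t}}(X^\phi),(w,\nu)\rangle = \langle \mathbf{S}_{\phi(\mathbf{s})\phi(\mathbf{t})}(X),(w,\nu)\rangle$. In particular, $\mathbf{S}_{\mathbf{0}\mathbf{T}}(X^\phi)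 = \mathbf{S}_{\mathbf{0}\mathbf{T}}(X)$, i.e., the 2D signature over the full square is invariant to stretching. -/
open MeasureTheory

/-!
After the chain rule `∂₁₂(X ∘ φ) = (∂₁₂X ∘ φ) φ₁' φ₂'`, the stretched signature integrand is
the integrand of `X` composed with `Φ = (φ₁ ∘ ·, φ₂ ∘ ·)` times the Jacobian `∏ φ₁'(r₁ⁱ) ∏ φ₂'(r₂ⁱ)`
(the permutation `ν` only reorders the factors `φ₂'`). Since `Φ` maps the doubly-ordered simplex
onto the stretched one, this is the change of variables formula, except that `Φ` need not be
injective. But a monotone `φᵢ` can only identify points across an interval where it is constant,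
where `φᵢ' = 0`; so `Φ` is injective where its Jacobian does not vanish, and the image of the
critical set is null by Sard's lemma.
-/

open Set

lemma hasDerivAt_comp_prodMk_left {f : ℝ × ℝ → ℝ} {a b : ℝ} (hf : DifferentiableAt ℝ f (a, b)) :
    HasDerivAt (fun u => f (u, b)) (fderiv ℝ f (a, b) (1, 0)) a :=
  hf.hasFDerivAt.comp_hasDerivAt a ((hasDerivAt_id a).prodMk (hasDerivAt_const a b))

lemma hasDerivAt_comp_prodMk_right {f : ℝ × ℝ → ℝ} {a b : ℝ} (hf : DifferentiableAt ℝ f (a, b)) :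
    HasDerivAt (fun v => f (a, v)) (fderiv ℝ f (a, b) (0, 1)) b :=
  hf.hasFDerivAt.comp_hasDerivAt b ((hasDerivAt_const b a).prodMk (hasDerivAt_id b))

lemma hasDerivAt_deriv_comp_prodMk {f : ℝ × ℝ → ℝ} (hf : ContDiff ℝ 2 f) (a b : ℝ) :
    HasDerivAt (fun u => deriv (fun v => f (u, v)) b) (d12 f (a, b)) a := by
  set D : ℝ × ℝ → ℝ := fun q => fderiv ℝ f q (0, 1)
  have hD : ContDiff ℝ 1 D :=
    (ContinuousLinearMap.apply ℝ ℝ ((0 : ℝ), (1 : ℝ))).contDiff.comp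
      (hf.fderiv_right (m := 1) (by norm_num))
  have hpartial : (fun u => deriv (fun v => f (u, v)) b) = fun u => D (u, b) :=
    funext fun u => (hasDerivAt_comp_prodMk_right
      ((hf.differentiable (by norm_num)).differentiableAt)).deriv
  have key := hasDerivAt_comp_prodMk_left (a := a) (b := b)
    ((hD.differentiable one_ne_zero).differentiableAt)
  rw [← hpartial] at key
  convert key using 1
  exact key.deriv

lemma d12_comp_prodMap {f : ℝ × ℝ → ℝ} (hf : ContDiff ℝ 2 f) {φ1 φ2 : ℝ → ℝ} {a b : ℝ}
    (h1 : DifferentiableAt ℝ φ1 a) (h2 : DifferentiableAt ℝ φ2 b) :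
    d12 (fun p => f (φ1 p.1, φ2 p.2)) (a, b) = d12 f (φ1 a, φ2 b) * deriv φ1 a * deriv φ2 b := by
  have hinner : (fun u => deriv (fun v => f (φ1 u, φ2 v)) b) =
      fun u => deriv (fun v => f (φ1 u, v)) (φ2 b) * deriv φ2 b :=
    funext fun u => deriv_comp b ((hf.differentiable (by norm_num)).differentiableAt.comp _
      ((differentiableAt_const _).prodMk differentiableAt_id)) h2
  show deriv (fun u => deriv (fun v => f (φ1 u, φ2 v)) b) a = _
  rw [hinner]
  exact (((hasDerivAt_deriv_comp_prodMk hf (φ1 a) (φ2 b)).comp a h1.hasDerivAt).mul_const _).deriv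

lemma deriv_eq_zero_of_eqOn_Icc {φ : ℝ → ℝ} {x y : ℝ} (hxy : x < y)
    (hc : EqOn φ (fun _ => φ x) (Icc x y)) : deriv φ x = 0 := by
  by_cases hφ : DifferentiableAt ℝ φ x
  · rw [← hφ.derivWithin (uniqueDiffOn_Icc hxy x (left_mem_Icc.2 hxy.le)),
      derivWithin_congr hc rfl, derivWithin_fun_const, Pi.zero_apply]
  · exact deriv_zero_of_not_differentiableAt hφ

lemma MonotoneOn.injOn_deriv_ne_zero {φ : ℝ → ℝ} {s : Set ℝ} (hm : MonotoneOn φ s)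
    (hs : s.OrdConnected) : InjOn φ {x ∈ s | deriv φ x ≠ 0} := by
  suffices ∀ x ∈ s, ∀ y ∈ s, x < y → φ x = φ y → deriv φ x = 0 by
    intro x hx y hy hxy
    by_contra hne
    rcases lt_or_gt_of_ne hne with h | h
    · exact hx.2 (this x hx.1 y hy.1 h hxy)
    · exact hy.2 (this y hy.1 x hx.1 h hxy.symm)
  intro x hx y hy hxy heq
  refine deriv_eq_zero_of_eqOn_Icc hxy fun z hz => ?_
  have hzs : z ∈ s := hs.out hx hy hz
  exact le_antisymm (heq ▸ hm hzs hy hz.2) (hm hx hzs hz.1)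

lemma MonotoneOn.injOn_comp_left_pi {ι : Type*} {φ : ℝ → ℝ} {s : Set ℝ} (hm : MonotoneOn φ s)
    (hs : s.OrdConnected) : InjOn (fun r : ι → ℝ => φ ∘ r) {r | ∀ i, r i ∈ s ∧ deriv φ (r i) ≠ 0} :=
  fun _ hr _ hr' h => funext fun i => hm.injOn_deriv_ne_zero hs (hr i) (hr' i) (congrFun h i)

lemma deriv_nonneg_of_monotoneOn_Icc {φ : ℝ → ℝ} {a b x : ℝ} (hab : a < b)
    (hm : MonotoneOn φ (Icc a b)) (hx : x ∈ Icc a b) : 0 ≤ deriv φ x := by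
  by_cases hφ : DifferentiableAt ℝ φ x
  · rw [← hφ.derivWithin (uniqueDiffOn_Icc hab x hx)]
    exact hm.derivWithin_nonneg
  · rw [deriv_zero_of_not_differentiableAt hφ]

lemma MonotoneOn.monotoneOn_invFunOn {φ : ℝ → ℝ} {s : Set ℝ} (hm : MonotoneOn φ s) :
    MonotoneOn (Function.invFunOn φ s) (φ '' s) := by
  rintro _ ⟨x, hx, rfl⟩ _ ⟨y, hy, rfl⟩ hxy
  have hx' := Function.invFunOn_pos (b := φ x) ⟨x, hx, rfl⟩
  have hy' := Function.invFunOn_pos (b := φ y) ⟨y, hy, rfl⟩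
  by_contra hlt
  have hle := hm hy'.1 hx'.1 (le_of_not_ge hlt)
  rw [hx'.2, hy'.2] at hle
  rw [le_antisymm hxy hle] at hlt
  exact hlt le_rfl

lemma image_comp_simplex {φ : ℝ → ℝ} {a b : ℝ} (hab : a ≤ b) (hc : ContinuousOn φ (Icc a b))
    (hm : MonotoneOn φ (Icc a b)) (n : ℕ) :
    (fun r => φ ∘ r) '' simplex a b n = simplex (φ a) (φ b) n := by
  have hIcc : φ '' Icc a b = Icc (φ a) (φ b) :=
    le_antisymm (image_subset_iff.2 fun x hx => ⟨hm ⟨le_rfl, hab⟩ hx hx.1, hm hx ⟨hab, le_rfl⟩ hx.2⟩)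
      (intermediate_value_Icc hab hc)
  apply Subset.antisymm
  · rintro _ ⟨r, ⟨hr, hmono⟩, rfl⟩
    refine ⟨fun i => ?_, fun i j hij => hm (hr i) (hr j) (hmono i j hij)⟩
    exact ⟨hm ⟨le_rfl, hab⟩ (hr i) (hr i).1, hm (hr i) ⟨hab, le_rfl⟩ (hr i).2⟩
  · rintro r ⟨hr, hmono⟩
    have hr' : ∀ i, r i ∈ φ '' Icc a b := fun i => hIcc ▸ hr i
    refine ⟨Function.invFunOn φ (Icc a b) ∘ r, ⟨fun i => ?_, fun i j hij => ?_⟩, ?_⟩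
    · exact (Function.invFunOn_pos (hr' i)).1
    · exact hm.monotoneOn_invFunOn (hr' i) (hr' j) (hmono i j hij)
    · exact funext fun i => (Function.invFunOn_pos (hr' i)).2

theorem integral_image_eq_integral_abs_det_fderiv_smul_of_injOn_det_ne_zero
    {E F : Type*} [NormedAddCommGroup E] [NormedSpace ℝ E] [FiniteDimensional ℝ E]
    [MeasurableSpace E] [BorelSpace E] (μ : Measure E) [μ.IsAddHaarMeasure]
    [NormedAddCommGroup F] [NormedSpace ℝ F]
    {s : Set E} {f : E → E} {f' : E → E →L[ℝ] E} (hs : MeasurableSet s)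
    (hf' : ∀ x ∈ s, HasFDerivWithinAt f (f' x) s x) (hdet : Measurable fun x => (f' x).det)
    (hf : InjOn f {x ∈ s | (f' x).det ≠ 0}) (g : E → F) :
    ∫ x in f '' s, g x ∂μ = ∫ x in s, |(f' x).det| • g (f x) ∂μ := by
  set s' := {x ∈ s | (f' x).det ≠ 0}
  have hs' : MeasurableSet s' := hs.inter (hdet (measurableSet_singleton 0).compl)
  have hcrit : μ (f '' (s \ s')) = 0 :=
    addHaar_image_eq_zero_of_det_fderivWithin_eq_zero μ
      (fun x hx => (hf' x hx.1).mono sdiff_subset) fun x hx => not_not.1 fun h => hx.2 ⟨hx.1, h⟩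
  have hae : f '' s' =ᵐ[μ] f '' s := by
    refine ae_eq_set.2 ⟨by rw [sdiff_eq_empty.2 (image_mono (sep_subset _ _)), measure_empty], ?_⟩
    refine measure_mono_null (fun y hy => ?_) hcrit
    obtain ⟨x, hx, rfl⟩ := hy.1
    exact ⟨x, ⟨hx, fun hx' => hy.2 ⟨x, hx', rfl⟩⟩, rfl⟩
  calc ∫ x in f '' s, g x ∂μ = ∫ x in f '' s', g x ∂μ := setIntegral_congr_set hae.symm
    _ = ∫ x in s', |(f' x).det| • g (f x) ∂μ :=
      integral_image_eq_integral_abs_det_fderiv_smul μ hs'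
        (fun x hx => (hf' x hx.1).mono (sep_subset _ _)) hf g
    _ = ∫ x in s, |(f' x).det| • g (f x) ∂μ :=
      (setIntegral_eq_of_subset_of_forall_sdiff_eq_zero hs (sep_subset _ _) fun x hx => by
        rw [not_not.1 fun h => hx.2 ⟨hx.1, h⟩, abs_zero, zero_smul]).symm

theorem ContinuousLinearMap.det_prodMap {E F : Type*} [NormedAddCommGroup E] [NormedSpace ℝ E]
    [FiniteDimensional ℝ E] [NormedAddCommGroup F] [NormedSpace ℝ F] [FiniteDimensional ℝ F]
    (f : E →L[ℝ] E) (g : F →L[ℝ] F) : (f.prodMap g).det = f.det * g.det :=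
  LinearMap.det_prodMap _ _

noncomputable def diagCLM {ι : Type*} [Fintype ι] (c : ι → ℝ) : (ι → ℝ) →L[ℝ] (ι → ℝ) :=
  ContinuousLinearMap.pi fun i =>
    (ContinuousLinearMap.toSpanSingleton ℝ (c i)).comp (ContinuousLinearMap.proj i)

lemma det_diagCLM {ι : Type*} [Fintype ι] (c : ι → ℝ) : (diagCLM c).det = ∏ i, c i := by
  simp [diagCLM, ContinuousLinearMap.det_pi]

lemma hasFDerivAt_comp_left_pi {ι : Type*} [Fintype ι] {φ : ℝ → ℝ} {y : ι → ℝ}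
    (hφ : ∀ i, DifferentiableAt ℝ φ (y i)) :
    HasFDerivAt (fun y : ι → ℝ => φ ∘ y) (diagCLM fun i => deriv φ (y i)) y :=
  hasFDerivAt_pi.2 fun i => (hφ i).hasDerivAt.hasFDerivAt.comp y (hasFDerivAt_apply i y)

instance {ι κ : Type*} [Fintype ι] [Fintype κ] :
    (volume : Measure ((ι → ℝ) × (κ → ℝ))).IsAddHaarMeasure :=
  Measure.prod.instIsAddHaarMeasure _ _

lemma image_prodMap_simplex2 {φ1 φ2 : ℝ → ℝ} {s1 s2 t1 t2 : ℝ} (h1 : s1 ≤ t1) (h2 : s2 ≤ t2)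
    (hc1 : ContinuousOn φ1 (Icc s1 t1)) (hc2 : ContinuousOn φ2 (Icc s2 t2))
    (hm1 : MonotoneOn φ1 (Icc s1 t1)) (hm2 : MonotoneOn φ2 (Icc s2 t2)) (n : ℕ) :
    (fun p : (Fin n → ℝ) × (Fin n → ℝ) => (φ1 ∘ p.1, φ2 ∘ p.2)) '' simplex2 s1 t1 s2 t2 n =
      simplex2 (φ1 s1) (φ1 t1) (φ2 s2) (φ2 t2) n := by
  change _ '' (simplex s1 t1 n ×ˢ simplex s2 t2 n) = simplex _ _ n ×ˢ simplex _ _ n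
  rw [← image_comp_simplex h1 hc1 hm1, ← image_comp_simplex h2 hc2 hm2, prod_image_image_eq]

lemma measurableSet_simplex (a b : ℝ) (n : ℕ) : MeasurableSet (simplex a b n) := by
  unfold simplex; measurability

theorem sigFull_comp_prodMap {d n : ℕ} {X : Fin d → ℝ × ℝ → ℝ} (hX : ∀ i, ContDiff ℝ 2 (X i))
    {φ1 φ2 : ℝ → ℝ} (hφ1 : Differentiable ℝ φ1) (hφ2 : Differentiable ℝ φ2)
    {s1 s2 t1 t2 : ℝ} (h1 : s1 ≤ t1) (h2 : s2 ≤ t2)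
    (hm1 : MonotoneOn φ1 (Icc s1 t1)) (hm2 : MonotoneOn φ2 (Icc s2 t2))
    (hd1 : ∀ x ∈ Icc s1 t1, 0 ≤ deriv φ1 x) (hd2 : ∀ x ∈ Icc s2 t2, 0 ≤ deriv φ2 x)
    (w : Fin n → Fin d) (ν : Equiv.Perm (Fin n)) :
    sigFull (fun i p => X i (φ1 p.1, φ2 p.2)) s1 s2 t1 t2 w ν =
      sigFull X (φ1 s1) (φ2 s2) (φ1 t1) (φ2 t2) w ν := by
  set S := simplex2 s1 t1 s2 t2 n
  set Φ := fun p : (Fin n → ℝ) × (Fin n → ℝ) => (φ1 ∘ p.1, φ2 ∘ p.2)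
  set J := fun p : (Fin n → ℝ) × (Fin n → ℝ) =>
    (diagCLM fun i => deriv φ1 (p.1 i)).prodMap (diagCLM fun i => deriv φ2 (p.2 i))
  set G := fun p : (Fin n → ℝ) × (Fin n → ℝ) => ∏ i, d12 (X (w i)) (p.1 i, p.2 (ν i))
  have hdetJ : ∀ p, (J p).det = (∏ i, deriv φ1 (p.1 i)) * ∏ i, deriv φ2 (p.2 i) := fun p => by
    rw [ContinuousLinearMap.det_prodMap, det_diagCLM, det_diagCLM]
  have hS : MeasurableSet S := (measurableSet_simplex _ _ _).prod (measurableSet_simplex _ _ _)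
  have hΦ : ∀ p ∈ S, HasFDerivWithinAt Φ (J p) S p := fun p _ =>
    ((hasFDerivAt_comp_left_pi fun i => hφ1 _).prodMap p
      (hasFDerivAt_comp_left_pi fun i => hφ2 _)).hasFDerivWithinAt
  have hJ : Measurable fun p => (J p).det := by
    simp only [hdetJ]
    fun_prop
  have hinj : InjOn Φ {p ∈ S | (J p).det ≠ 0} := by
    rintro p ⟨hp, hpJ⟩ q ⟨hq, hqJ⟩ hpq
    simp only [hdetJ, mul_ne_zero_iff, Finset.prod_ne_zero_iff, Finset.mem_univ,
      forall_const] at hpJ hqJ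
    exact Prod.ext
      (hm1.injOn_comp_left_pi ordConnected_Icc (fun i => ⟨hp.1.1 i, hpJ.1 i⟩)
        (fun i => ⟨hq.1.1 i, hqJ.1 i⟩) (congrArg Prod.fst hpq))
      (hm2.injOn_comp_left_pi ordConnected_Icc (fun i => ⟨hp.2.1 i, hpJ.2 i⟩)
        (fun i => ⟨hq.2.1 i, hqJ.2 i⟩) (congrArg Prod.snd hpq))
  have hintegrand : ∀ p ∈ S, ∏ i, d12 (fun q => X (w i) (φ1 q.1, φ2 q.2)) (p.1 i, p.2 (ν i)) =
      |(J p).det| • G (Φ p) := by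
    intro p hp
    rw [hdetJ, abs_of_nonneg (mul_nonneg (Finset.prod_nonneg fun i _ => hd1 _ (hp.1.1 i))
      (Finset.prod_nonneg fun i _ => hd2 _ (hp.2.1 i))), smul_eq_mul,
      ← Equiv.prod_comp ν fun i => deriv φ2 (p.2 i)]
    simp only [G, Φ, Function.comp_apply, d12_comp_prodMap (hX _) (hφ1 _) (hφ2 _),
      Finset.prod_mul_distrib]
    ring
  calc sigFull (fun i p => X i (φ1 p.1, φ2 p.2)) s1 s2 t1 t2 w ν
      = ∫ p in S, |(J p).det| • G (Φ p) := setIntegral_congr_fun hS hintegrand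
    _ = ∫ p in Φ '' S, G p :=
      (integral_image_eq_integral_abs_det_fderiv_smul_of_injOn_det_ne_zero volume hS hΦ hJ
        hinj G).symm
    _ = sigFull X (φ1 s1) (φ2 s2) (φ1 t1) (φ2 t2) w ν := by
      rw [image_prodMap_simplex2 h1 h2 hφ1.continuous.continuousOn hφ2.continuous.continuousOn
        hm1 hm2]
      rfl

lemma sigFull_degenerate {d n : ℕ} (X Y : Fin d → ℝ × ℝ → ℝ) (s1 s2 t2 : ℝ)
    (w : Fin n → Fin d) (ν : Equiv.Perm (Fin n)) :
    sigFull X s1 s2 s1 t2 w ν = sigFull Y s1 s2 s1 t2 w ν := by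
  cases n with
  | zero => simp only [sigFull, Finset.univ_eq_empty, Finset.prod_empty]
  | succ m =>
    have hsub : simplex2 s1 s1 s2 t2 (m + 1) ⊆ {fun _ => s1} ×ˢ univ := fun p hp =>
      ⟨funext fun i => le_antisymm (hp.1.1 i).2 (hp.1.1 i).1, trivial⟩
    have hnull : volume (simplex2 s1 s1 s2 t2 (m + 1)) = 0 := by
      refine measure_mono_null hsub ?_
      rw [Measure.volume_eq_prod, Measure.prod_prod, measure_singleton, zero_mul]
    simp only [sigFull, Measure.restrict_eq_zero.2 hnull, integral_zero_measure]

/-- the full 2D signature of a stretched field `X ∘ φ`, where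
`φ(t₁,t₂) = (φ₁(t₁), φ₂(t₂))` with `φᵢ` `C¹`, monotone, fixing `0` and `T`, equals
the signature of `X` over the stretched rectangle; in particular the signature over
the whole square `[0,T]²` is invariant to stretching. -/
theorem stmt7 {d : ℕ} (T : ℝ) (hT : 0 ≤ T) (X : Fin d → ℝ × ℝ → ℝ)
    (hX : ∀ i, ContDiff ℝ 2 (X i))
    (φ1 φ2 : ℝ → ℝ) (hφ1 : ContDiff ℝ 1 φ1) (hφ2 : ContDiff ℝ 1 φ2)
    (hm1 : MonotoneOn φ1 (Set.Icc 0 T)) (hm2 : MonotoneOn φ2 (Set.Icc 0 T))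
    (h01 : φ1 0 = 0) (hT1 : φ1 T = T) (h02 : φ2 0 = 0) (hT2 : φ2 T = T)
    {n : ℕ} (w : Fin n → Fin d) (ν : Equiv.Perm (Fin n))
    (s1 s2 t1 t2 : ℝ) (hs1 : 0 ≤ s1) (h1 : s1 ≤ t1) (ht1 : t1 ≤ T)
    (hs2 : 0 ≤ s2) (h2 : s2 ≤ t2) (ht2 : t2 ≤ T) :
    (sigFull (fun i p => X i (φ1 p.1, φ2 p.2)) s1 s2 t1 t2 w ν =
      sigFull X (φ1 s1) (φ2 s2) (φ1 t1) (φ2 t2) w ν) ∧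
    sigFull (fun i p => X i (φ1 p.1, φ2 p.2)) 0 0 T T w ν =
      sigFull X 0 0 T T w ν := by
  -- For `T = 0` monotonicity says nothing about the sign of `φᵢ'`; instead both sides are
  -- integrals over a null set, or over a point with integrand `1` when `n = 0`.
  rcases hT.eq_or_lt with rfl | hT
  · obtain ⟨rfl, rfl, rfl, rfl⟩ : s1 = 0 ∧ t1 = 0 ∧ s2 = 0 ∧ t2 = 0 := by
      refine ⟨?_, ?_, ?_, ?_⟩ <;> linarith
    rw [h01, h02]
    exact ⟨sigFull_degenerate _ _ _ _ _ w ν, sigFull_degenerate _ _ _ _ _ w ν⟩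
  have hstretch : ∀ s1 s2 t1 t2 : ℝ, 0 ≤ s1 → s1 ≤ t1 → t1 ≤ T → 0 ≤ s2 → s2 ≤ t2 → t2 ≤ T →
      sigFull (fun i p => X i (φ1 p.1, φ2 p.2)) s1 s2 t1 t2 w ν =
        sigFull X (φ1 s1) (φ2 s2) (φ1 t1) (φ2 t2) w ν := by
    intro s1 s2 t1 t2 hs1 h1 ht1 hs2 h2 ht2
    have hI1 := Icc_subset_Icc hs1 ht1
    have hI2 := Icc_subset_Icc hs2 ht2
    exact sigFull_comp_prodMap hX (hφ1.differentiable one_ne_zero)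
      (hφ2.differentiable one_ne_zero) h1 h2 (hm1.mono hI1) (hm2.mono hI2)
      (fun x hx => deriv_nonneg_of_monotoneOn_Icc hT hm1 (hI1 hx))
      (fun x hx => deriv_nonneg_of_monotoneOn_Icc hT hm2 (hI2 hx)) w ν
  refine ⟨hstretch s1 s2 t1 t2 hs1 h1 ht1 hs2 h2 ht2, ?_⟩
  simpa only [h01, h02, hT1, hT2] using hstretch 0 0 T T le_rfl hT.le le_rfl le_rfl hT.le le_rfl
end

section
/- Let $X \in C^2([-1,1]^2;\mathbb{R}^d)$ and define its rotation by 90 degrees $X^{\pi/2}(t_1,t_2) = X(-t_2,t_1)$. Then for any word $w$ of length $n$ and permutation $\nu \in \Sigma_n$, the full 2D signature satisfies $\langle \mathbf{S}_{-\mathbf{1},\mathbf{1}}(X^{\pi/2}),(w,\nu)\rangle = (-1)^n \langle \mathbf{S}_{-\mathbf{1},\mathbf{1}}(X), (w_{\nu^{-1}\circ\rho_n}, \nu^{-1}\circ\rho_n)\rangle$, where $\rho_n$ is the reversal permutation $\rho_n(i) = n-i+1$ and $w_\sigma = (w_{\sigma(1)},\dots,w_{\sigma(n)})$. -/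
open MeasureTheory

/-- The reversal permutation of `Fin n`, `i ↦ n - 1 - i`. -/
def reversalPerm (n : ℕ) : Equiv.Perm (Fin n) :=
  ⟨Fin.rev, Fin.rev, Fin.rev_rev, Fin.rev_rev⟩

/-
Rotating the field by a quarter turn, `X^{π/2} = X ∘ R` with `R(t₁, t₂) = (-t₂, t₁)`, turns its
mixed derivative into `∂₁₂X^{π/2}(r₁, r₂) = -∂₁₂X(-r₂, r₁)` (chain rule plus symmetry of second
derivatives), which contributes the sign `(-1)ⁿ`. In the signature integral one then substitutes
`(r₁, r₂) ↦ (-r₂ ∘ rev, r₁)`: it preserves Lebesgue measure and maps the simplex over a rectangle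
onto the simplex over the rotated rectangle, and after reindexing the product by `ν⁻¹ ∘ ρₙ` the
integrand becomes that of the signature of `X` at `(w ∘ ν⁻¹ ∘ ρₙ, ν⁻¹ ∘ ρₙ)`.
-/

lemma d12_eq_fderiv_fderiv {f : ℝ × ℝ → ℝ} (hf : ContDiff ℝ 2 f) (p : ℝ × ℝ) :
    d12 f p = fderiv ℝ (fderiv ℝ f) p (1, 0) (0, 1) := by
  have hf1 : Differentiable ℝ f := hf.differentiable two_ne_zero
  have hf2 : Differentiable ℝ (fderiv ℝ f) :=
    (hf.fderiv_right (le_refl _)).differentiable one_ne_zero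
  have inner (a : ℝ) : deriv (fun b => f (a, b)) p.2 = fderiv ℝ f (a, p.2) (0, 1) :=
    ((hf1 _).hasFDerivAt.comp_hasDerivAt p.2
      ((hasDerivAt_const p.2 a).prodMk (hasDerivAt_id p.2))).deriv
  have outer : HasDerivAt (fun a => fderiv ℝ f (a, p.2)) (fderiv ℝ (fderiv ℝ f) p (1, 0)) p.1 :=
    (hf2 _).hasFDerivAt.comp_hasDerivAt p.1 ((hasDerivAt_id p.1).prodMk (hasDerivAt_const p.1 p.2))
  simp only [d12, inner]
  simpa using (outer.clm_apply (hasDerivAt_const p.1 ((0 : ℝ), (1 : ℝ)))).deriv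

def quarterTurn : ℝ × ℝ →L[ℝ] ℝ × ℝ :=
  (-ContinuousLinearMap.snd ℝ ℝ ℝ).prod (ContinuousLinearMap.fst ℝ ℝ ℝ)

@[simp]
lemma quarterTurn_apply (p : ℝ × ℝ) : quarterTurn p = (-p.2, p.1) := rfl

lemma d12_comp_quarterTurn {f : ℝ × ℝ → ℝ} (hf : ContDiff ℝ 2 f) (p : ℝ × ℝ) :
    d12 (fun q => f (-q.2, q.1)) p = -d12 f (-p.2, p.1) := by
  have hfR : ContDiff ℝ 2 (f ∘ quarterTurn) := hf.comp quarterTurn.contDiff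
  -- the quarter turn maps the directions `(1, 0), (0, 1)` to `(0, 1), -(1, 0)`; Schwarz's
  -- theorem then restores their order
  have hchain := iteratedFDeriv_two_apply (𝕜 := ℝ) (f ∘ quarterTurn) p ![(1, 0), (0, 1)]
  rw [quarterTurn.iteratedFDeriv_comp_right hf p le_rfl] at hchain
  simp only [ContinuousMultilinearMap.compContinuousLinearMap_apply, iteratedFDeriv_two_apply,
    Matrix.cons_val_zero, Matrix.cons_val_one, quarterTurn_apply, neg_zero] at hchain
  have hsymm := hf.contDiffAt (x := (-p.2, p.1)).isSymmSndFDerivAt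
    (by simp [minSmoothness_of_isRCLikeNormedField])
  change d12 (f ∘ quarterTurn) p = _
  rw [d12_eq_fderiv_fderiv hfR, d12_eq_fderiv_fderiv hf, ← hchain, hsymm,
    show ((-1 : ℝ), (0 : ℝ)) = -(1, 0) by simp, map_neg, neg_apply]

noncomputable def negRev (n : ℕ) : (Fin n → ℝ) ≃ᵐ (Fin n → ℝ) :=
  MeasurableEquiv.arrowCongr' (reversalPerm n) (MeasurableEquiv.neg ℝ)

@[simp]
lemma negRev_apply {n : ℕ} (q : Fin n → ℝ) (k : Fin n) : negRev n q k = -q (Fin.rev k) := rfl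

lemma measurePreserving_negRev (n : ℕ) : MeasurePreserving (negRev n) :=
  volume_preserving_arrowCongr' _ _ (Measure.measurePreserving_neg _)

lemma negRev_mem_simplex {a b : ℝ} {n : ℕ} {q : Fin n → ℝ} (hq : q ∈ simplex a b n) :
    negRev n q ∈ simplex (-b) (-a) n := by
  obtain ⟨hbound, hmono⟩ := hq
  refine ⟨fun i => ?_, fun i j hij => ?_⟩
  · simpa [and_comm] using hbound (Fin.rev i)
  · simpa using hmono _ _ (Fin.rev_le_rev.mpr hij)

@[simp]
lemma negRev_negRev {n : ℕ} (q : Fin n → ℝ) : negRev n (negRev n q) = q := by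
  ext k
  simp

lemma negRev_mem_simplex_iff {a b : ℝ} {n : ℕ} {q : Fin n → ℝ} :
    negRev n q ∈ simplex a b n ↔ q ∈ simplex (-b) (-a) n := by
  refine ⟨fun h => ?_, fun h => by simpa using negRev_mem_simplex h⟩
  simpa using negRev_mem_simplex h

noncomputable def swapNegRev (n : ℕ) :
    ((Fin n → ℝ) × (Fin n → ℝ)) ≃ᵐ ((Fin n → ℝ) × (Fin n → ℝ)) :=
  MeasurableEquiv.prodComm.trans ((negRev n).prodCongr (MeasurableEquiv.refl _))

@[simp]
lemma swapNegRev_apply {n : ℕ} (p : (Fin n → ℝ) × (Fin n → ℝ)) :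
    swapNegRev n p = (negRev n p.2, p.1) := rfl

lemma measurePreserving_swapNegRev (n : ℕ) : MeasurePreserving (swapNegRev n) :=
  ((measurePreserving_negRev n).prod (MeasurePreserving.id _)).comp
    Measure.measurePreserving_swap

lemma swapNegRev_preimage_simplex2 (s1 t1 s2 t2 : ℝ) (n : ℕ) :
    swapNegRev n ⁻¹' simplex2 s1 t1 s2 t2 n = simplex2 s2 t2 (-t1) (-s1) n := by
  ext p
  simp only [Set.mem_preimage, simplex2, Set.mem_ofPred_eq, swapNegRev_apply,
    negRev_mem_simplex_iff, and_comm]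

lemma prod_d12_comp_quarterTurn {d n : ℕ} {X : Fin d → ℝ × ℝ → ℝ}
    (hX : ∀ i, ContDiff ℝ 2 (X i)) (w : Fin n → Fin d) (ν : Equiv.Perm (Fin n))
    (p : (Fin n → ℝ) × (Fin n → ℝ)) :
    ∏ i, d12 (fun q => X (w i) (-q.2, q.1)) (p.1 i, p.2 (ν i)) =
      (-1) ^ n * ∏ j, d12 (X (w ((ν⁻¹ * reversalPerm n) j)))
        ((swapNegRev n p).1 j, (swapNegRev n p).2 ((ν⁻¹ * reversalPerm n) j)) := by
  rw [← Equiv.prod_comp (ν⁻¹ * reversalPerm n)]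
  simp [d12_comp_quarterTurn (hX _), Finset.prod_neg, reversalPerm]

theorem sigFull_comp_quarterTurn {d : ℕ} {X : Fin d → ℝ × ℝ → ℝ}
    (hX : ∀ i, ContDiff ℝ 2 (X i)) (s1 s2 t1 t2 : ℝ) {n : ℕ} (w : Fin n → Fin d)
    (ν : Equiv.Perm (Fin n)) :
    sigFull (fun i p => X i (-p.2, p.1)) s1 s2 t1 t2 w ν =
      (-1) ^ n * sigFull X (-t2) s1 (-s2) t1
        (w ∘ (ν⁻¹ * reversalPerm n)) (ν⁻¹ * reversalPerm n) := by
  have hchange := (measurePreserving_swapNegRev n).setIntegral_preimage_emb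
    (swapNegRev n).measurableEmbedding
    (fun q => ∏ j, d12 (X (w ((ν⁻¹ * reversalPerm n) j))) (q.1 j, q.2 ((ν⁻¹ * reversalPerm n) j)))
    (simplex2 (-t2) (-s2) s1 t1 n)
  rw [swapNegRev_preimage_simplex2, neg_neg, neg_neg] at hchange
  simp only [sigFull, prod_d12_comp_quarterTurn hX, integral_const_mul, Function.comp_apply]
  rw [hchange]

/-- rotating a field by 90 degrees, `X^{π/2}(t₁,t₂) = X(-t₂,t₁)`, the full
2D signature over `[-1,1]²` satisfies
`⟨S(X^{π/2}),(w,ν)⟩ = (-1)ⁿ ⟨S(X), (w_{ν⁻¹∘ρₙ}, ν⁻¹∘ρₙ)⟩`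
with `ρₙ` the reversal permutation. -/
theorem stmt8 {d : ℕ} (X : Fin d → ℝ × ℝ → ℝ) (hX : ∀ i, ContDiff ℝ 2 (X i))
    {n : ℕ} (w : Fin n → Fin d) (ν : Equiv.Perm (Fin n)) :
    sigFull (fun i p => X i (-p.2, p.1)) (-1) (-1) 1 1 w ν =
      (-1 : ℝ) ^ n *
        sigFull X (-1) (-1) 1 1 (w ∘ (ν⁻¹ * reversalPerm n)) (ν⁻¹ * reversalPerm n) := by
  simpa using sigFull_comp_quarterTurn hX (-1) (-1) 1 1 w ν
end

section
/- Let $X(r_1,r_2) = (\sin(\pi r_2)\, r_1, \sin(\pi r_1)\, r_2)$ on $[0,1]^2$. Then the level-2 identity 2D signature coefficient satisfies $\langle \mathbf{S}_{\mathbf{0}\mathbf{1}}(X), ((1,2),\mathrm{id})\rangle = \pi \int_0^1\int_0^1 \sin(\pi s_2)\, s_1 \cos(\pi s_1)\, ds_1\, ds_2 = -4/\pi^2 \neq 0$. Since $X$ is homotopic (with fixed boundary) to the zero map on $[0,1]^2$, the 2D signature is not homotopy invariant. -/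
open MeasureTheory

/-!
Both mixed partials are explicit, `∂₁₂X¹ = π cos(π r₂)` and `∂₁₂X² = π cos(π r₁)`, so the
integrand over `Δ² × Δ²` factors into a function of the increasing pair `(r₁¹, r₁²)` times a
function of `(r₂¹, r₂²)`. Each factor is an integral over the triangle `0 ≤ x ≤ y ≤ 1`, which
Fubini turns into one-variable integrals: `∫ π cos(π r₁²) = -2/π` and `∫ π cos(π r₂¹) = 2/π`.
-/

open Real Set

lemma d12_mul_fst (g : ℝ → ℝ) (p : ℝ × ℝ) :
    d12 (fun q => g q.2 * q.1) p = deriv g p.2 := by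
  have inner : ∀ a : ℝ, deriv (fun b => g b * a) p.2 = deriv g p.2 * a :=
    fun a => deriv_mul_const_field a
  simp [d12, inner]

lemma d12_mul_snd (g : ℝ → ℝ) (p : ℝ × ℝ) :
    d12 (fun q => g q.1 * q.2) p = deriv g p.1 := by
  have inner : ∀ a : ℝ, deriv (fun b => g a * b) p.2 = g a := fun a => by simp
  simp only [d12, inner]

lemma deriv_sin_mul_left (c x : ℝ) : deriv (fun y => sin (c * y)) x = c * cos (c * x) := by
  simpa using deriv_comp_mul_left c sin x

section Simplex

variable {a b : ℝ}

lemma setIntegral_simplex2_mul {n : ℕ} (s1 t1 s2 t2 : ℝ) (f g : (Fin n → ℝ) → ℝ) :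
    ∫ p in simplex2 s1 t1 s2 t2 n, f p.1 * g p.2 =
      (∫ r in simplex s1 t1 n, f r) * ∫ r in simplex s2 t2 n, g r := by
  rw [show simplex2 s1 t1 s2 t2 n = simplex s1 t1 n ×ˢ simplex s2 t2 n from rfl,
    Measure.volume_eq_prod, setIntegral_prod_mul]

def triangle (a b : ℝ) : Set (ℝ × ℝ) := {z | a ≤ z.1 ∧ z.1 ≤ z.2 ∧ z.2 ≤ b}

lemma measurableSet_triangle : MeasurableSet (triangle a b) :=
  (measurableSet_le measurable_const measurable_fst).inter
    ((measurableSet_le measurable_fst measurable_snd).inter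
      (measurableSet_le measurable_snd measurable_const))

lemma triangle_subset_Icc_prod_Icc : triangle a b ⊆ Icc a b ×ˢ Icc a b :=
  fun _ ⟨ha, hxy, hb⟩ => ⟨⟨ha, hxy.trans hb⟩, ⟨ha.trans hxy, hb⟩⟩

lemma setIntegral_triangle {f : ℝ × ℝ → ℝ} (hf : Continuous f) (hab : a ≤ b) :
    ∫ z in triangle a b, f z = ∫ x in a..b, ∫ y in x..b, f (x, y) := by
  have hint : IntegrableOn ((triangle a b).indicator f) (Icc a b ×ˢ Icc a b) :=
    (hf.continuousOn.integrableOn_compact (isCompact_Icc.prod isCompact_Icc)).indicator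
      measurableSet_triangle
  have slice : ∀ x ∈ Icc a b,
      ∫ y in Icc a b, (triangle a b).indicator f (x, y) = ∫ y in x..b, f (x, y) := by
    intro x hx
    have hind : (fun y => (triangle a b).indicator f (x, y)) =
        (Icc x b).indicator (fun y => f (x, y)) := by
      ext y
      by_cases hy : y ∈ Icc x b
      · rw [indicator_of_mem hy, indicator_of_mem (show (x, y) ∈ triangle a b from ⟨hx.1, hy⟩)]
      · rw [indicator_of_notMem hy, indicator_of_notMem fun h : (x, y) ∈ triangle a b => hy h.2]
    rw [hind, setIntegral_indicator measurableSet_Icc,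
      inter_eq_right.mpr (Icc_subset_Icc hx.1 le_rfl), integral_Icc_eq_integral_Ioc,
      ← intervalIntegral.integral_of_le hx.2]
  rw [← inter_eq_right.mpr triangle_subset_Icc_prod_Icc,
    ← setIntegral_indicator measurableSet_triangle, Measure.volume_eq_prod,
    setIntegral_prod _ (by rwa [← Measure.volume_eq_prod]),
    setIntegral_congr_fun measurableSet_Icc slice,
    integral_Icc_eq_integral_Ioc, ← intervalIntegral.integral_of_le hab]

lemma simplex_two_eq_preimage_triangle :
    simplex a b 2 = MeasurableEquiv.piFinTwo (fun _ => ℝ) ⁻¹' triangle a b := by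
  ext r
  simp only [MeasurableEquiv.piFinTwo_apply, mem_preimage]
  constructor
  · rintro ⟨hbound, hmono⟩
    exact ⟨(hbound 0).1, hmono 0 1 (by decide), (hbound 1).2⟩
  · rintro ⟨ha, hmono, hb⟩
    refine ⟨fun i => ?_, fun i j hij => ?_⟩
    · fin_cases i <;> constructor <;> simp <;> linarith
    · fin_cases i <;> fin_cases j <;> simp_all

lemma setIntegral_simplex_two {f : ℝ × ℝ → ℝ} (hf : Continuous f) (hab : a ≤ b) :
    ∫ r in simplex a b 2, f (r 0, r 1) = ∫ x in a..b, ∫ y in x..b, f (x, y) := by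
  rw [simplex_two_eq_preimage_triangle, ← setIntegral_triangle hf hab]
  exact (volume_preserving_piFinTwo fun _ => ℝ).setIntegral_preimage_emb
    (MeasurableEquiv.measurableEmbedding _) f _

end Simplex

lemma integral_pi_mul_cos_pi_mul (a b : ℝ) :
    ∫ x in a..b, π * cos (π * x) = sin (π * b) - sin (π * a) := by
  rw [intervalIntegral.integral_const_mul, intervalIntegral.mul_integral_comp_mul_left,
    integral_cos]

lemma integral_sin_pi_mul : ∫ x in (0:ℝ)..1, sin (π * x) = 2 / π := by
  rw [eq_div_iff pi_ne_zero, mul_comm, intervalIntegral.mul_integral_comp_mul_left, integral_sin]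
  norm_num

lemma integral_mul_cos_pi_mul : ∫ x in (0:ℝ)..1, x * cos (π * x) = -2 / π ^ 2 := by
  have hsin : ∀ x, HasDerivAt (fun y => sin (π * y) / π) (cos (π * x)) x := fun x => by
    simpa [pi_ne_zero] using (((hasDerivAt_id x).const_mul π).sin.div_const π)
  rw [intervalIntegral.integral_mul_deriv_eq_deriv_mul (fun x _ => hasDerivAt_id' x)
    (fun x _ => hsin x) (by simp) (by apply Continuous.intervalIntegrable; fun_prop)]
  simp only [one_mul, intervalIntegral.integral_div, integral_sin_pi_mul]
  field_simp
  simp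

lemma setIntegral_simplex_pi_mul_cos_snd :
    ∫ r in simplex 0 1 2, π * cos (π * r 1) = -(2 / π) := by
  rw [setIntegral_simplex_two (f := fun z => π * cos (π * z.2)) (by fun_prop) zero_le_one]
  simp only [integral_pi_mul_cos_pi_mul, mul_one, sin_pi, zero_sub, intervalIntegral.integral_neg,
    integral_sin_pi_mul]

lemma setIntegral_simplex_pi_mul_cos_fst :
    ∫ r in simplex 0 1 2, π * cos (π * r 0) = 2 / π := by
  rw [setIntegral_simplex_two (f := fun z => π * cos (π * z.1)) (by fun_prop) zero_le_one]
  simp only [intervalIntegral.integral_const, smul_eq_mul]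
  have expand : ∀ x : ℝ, (1 - x) * (π * cos (π * x)) = π * cos (π * x) - π * (x * cos (π * x)) :=
    fun x => by ring
  simp only [expand]
  rw [intervalIntegral.integral_sub (by apply Continuous.intervalIntegrable; fun_prop)
    (by apply Continuous.intervalIntegrable; fun_prop), integral_pi_mul_cos_pi_mul,
    intervalIntegral.integral_const_mul, integral_mul_cos_pi_mul]
  field_simp
  simp

lemma sigFull_sin_mul_field :
    sigFull (![fun q => sin (π * q.2) * q.1, fun q => sin (π * q.1) * q.2])
      0 0 1 1 (![0, 1] : Fin 2 → Fin 2) 1 = -4 / π ^ 2 := by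
  have integrand : ∀ p : (Fin 2 → ℝ) × (Fin 2 → ℝ),
      ∏ i, d12 (![fun q => sin (π * q.2) * q.1, fun q => sin (π * q.1) * q.2] (![0, 1] i))
        (p.1 i, p.2 ((1 : Equiv.Perm (Fin 2)) i)) =
      π * cos (π * p.1 1) * (π * cos (π * p.2 0)) := fun p => by
    simp [Fin.prod_univ_two, d12_mul_fst (fun y => sin (π * y)),
      d12_mul_snd (fun y => sin (π * y)), deriv_sin_mul_left]
    ring
  simp only [sigFull, integrand]
  rw [setIntegral_simplex2_mul (n := 2) _ _ _ _ (fun r => π * cos (π * r 1))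
      (fun r => π * cos (π * r 0)),
    setIntegral_simplex_pi_mul_cos_snd, setIntegral_simplex_pi_mul_cos_fst]
  ring

lemma pi_mul_integral_sin_mul_cos :
    π * ∫ s1 in (0:ℝ)..1, ∫ s2 in (0:ℝ)..1, sin (π * s2) * s1 * cos (π * s1) = -4 / π ^ 2 := by
  simp only [mul_assoc, intervalIntegral.integral_mul_const, integral_sin_pi_mul,
    intervalIntegral.integral_const_mul, integral_mul_cos_pi_mul]
  field_simp
  ring

open Real in
/-- for the field `X(r₁,r₂) = (sin(π r₂) r₁, sin(π r₁) r₂)` on `[0,1]²`,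
which is boundary-fixing homotopic to the zero map, the level-2 identity 2D signature
coefficient `⟨S_{0,1}(X),((1,2),id)⟩` equals
`π ∫₀¹∫₀¹ sin(π s₂) s₁ cos(π s₁) ds₁ ds₂ = -4/π² ≠ 0`;
hence the 2D signature is not homotopy invariant. -/
theorem stmt9 :
    (sigFull (![fun q => Real.sin (π * q.2) * q.1, fun q => Real.sin (π * q.1) * q.2])
        0 0 1 1 (![0, 1] : Fin 2 → Fin 2) 1 =
      π * ∫ s1 in (0:ℝ)..1, ∫ s2 in (0:ℝ)..1,
        Real.sin (π * s2) * s1 * Real.cos (π * s1)) ∧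
    (sigFull (![fun q => Real.sin (π * q.2) * q.1, fun q => Real.sin (π * q.1) * q.2])
        0 0 1 1 (![0, 1] : Fin 2 → Fin 2) 1 = -4 / π ^ 2) ∧
    sigFull (![fun q => Real.sin (π * q.2) * q.1, fun q => Real.sin (π * q.1) * q.2])
        0 0 1 1 (![0, 1] : Fin 2 → Fin 2) 1 ≠ 0 := by
  rw [sigFull_sin_mul_field, pi_mul_integral_sin_mul_cos]
  exact ⟨rfl, rfl, by simp [pi_ne_zero]⟩
end

section
/- Let $X, \tilde{X} \in C^2([0,T]^2;\mathbb{R}^d)$ and let $(w,\tau)$ be an extended word of length $n$. Then $|\langle \mathbf{S}_{\mathbf{s}\mathbf{t}}(X) - \mathbf{S}_{\mathbf{s}\mathbf{t}}(\tilde{X}), (w,\tau)\rangle| \le \frac{T^{2n}}{(n!)^2} \sum_{k=1}^n \left(\prod_{i=1}^{k-1}\|X^{w_i}\|_{C^2} \prod_{j=k+1}^n \|\tilde{X}^{w_j}\|_{C^2}\right) \|X^{w_k} - \tilde{X}^{w_k}\|_{C^2}$ for all $(\mathbf{s},\mathbf{t})$ with $\mathbf{s} \le \mathbf{t}$ componentwise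 in $[0,T]^2$. In particular $X \mapsto \mathbf{S}_{\mathbf{s}\mathbf{t}}(X)$ is locally Lipschitz in the $C^2$ norm. -/
/-! The integrands of the two signatures are products of mixed partials, and a difference of
products telescopes as `∑ₖ (∏_{i<k} aᵢ) (∏_{j>k} bⱼ) (aₖ - bₖ)`. Since `∂₁₂` is linear and bounded
by the `C²` norm, the integrand of the difference is bounded pointwise by the sum in the estimate.
The doubly-ordered simplex is a product of two ordered simplices, and the `n!` preimages of an
ordered simplex under the coordinate permutations tile the cube up to the null diagonals
`{rᵢ = rⱼ}`, so each ordered simplex has volume at most `(t - s)ⁿ / n!`. -/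

open MeasureTheory

/-- The `C²` supremum norm of `f` on the square `[0,T]²`: the supremum of the norms of
all iterated derivatives of order `≤ 2` over the square. -/
noncomputable def C2norm (f : ℝ × ℝ → ℝ) (T : ℝ) : ℝ :=
  sSup {y : ℝ | ∃ k : ℕ, k ≤ 2 ∧ ∃ p ∈ Set.Icc (0:ℝ) T ×ˢ Set.Icc (0:ℝ) T,
    y = ‖iteratedFDeriv ℝ k f p‖}

open Finset
open scoped ENNReal Nat

section PartialDerivatives

variable {E : Type*} [NormedAddCommGroup E] [NormedSpace ℝ E]

lemma deriv_partial_fst_eq_fderiv {g : ℝ × ℝ → E} {a b : ℝ} (hg : DifferentiableAt ℝ g (a, b)) :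
    deriv (fun x => g (x, b)) a = fderiv ℝ g (a, b) (1, 0) :=
  (hg.hasFDerivAt.comp_hasDerivAt a ((hasDerivAt_id a).prodMk (hasDerivAt_const a b))).deriv

lemma deriv_partial_snd_eq_fderiv {g : ℝ × ℝ → E} {a b : ℝ} (hg : DifferentiableAt ℝ g (a, b)) :
    deriv (fun y => g (a, y)) b = fderiv ℝ g (a, b) (0, 1) :=
  (hg.hasFDerivAt.comp_hasDerivAt b ((hasDerivAt_const b a).prodMk (hasDerivAt_id b))).deriv

end PartialDerivatives

lemma d12_eq_iteratedFDeriv {f : ℝ × ℝ → ℝ} (hf : ContDiff ℝ 2 f) (p : ℝ × ℝ) :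
    d12 f p = iteratedFDeriv ℝ 2 f p ![(1, 0), (0, 1)] := by
  have hf1 : Differentiable ℝ f := hf.differentiable (by norm_num)
  have hf2 : Differentiable ℝ (fderiv ℝ f) :=
    (hf.fderiv_right (m := 1) (by norm_num)).differentiable one_ne_zero
  have hpartial : (fun a => deriv (fun b => f (a, b)) p.2) = fun a => fderiv ℝ f (a, p.2) (0, 1) :=
    funext fun a => deriv_partial_snd_eq_fderiv (hf1 _)
  rw [d12, hpartial, deriv_partial_fst_eq_fderiv ((hf2 _).clm_apply (differentiableAt_const _)),
    fderiv_clm_apply (hf2 _) (differentiableAt_const _), iteratedFDeriv_two_apply]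
  simp

lemma continuous_d12 {f : ℝ × ℝ → ℝ} (hf : ContDiff ℝ 2 f) : Continuous (d12 f) := by
  simp only [funext (d12_eq_iteratedFDeriv hf)]
  exact (continuous_eval_const _).comp (hf.continuous_iteratedFDeriv le_rfl)

lemma abs_d12_le_norm_iteratedFDeriv {f : ℝ × ℝ → ℝ} (hf : ContDiff ℝ 2 f) (p : ℝ × ℝ) :
    |d12 f p| ≤ ‖iteratedFDeriv ℝ 2 f p‖ := by
  rw [d12_eq_iteratedFDeriv hf, ← Real.norm_eq_abs]
  refine ((iteratedFDeriv ℝ 2 f p).le_opNorm _).trans_eq ?_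
  simp [Fin.prod_univ_two, Prod.norm_def]

lemma d12_sub {f g : ℝ × ℝ → ℝ} (hf : ContDiff ℝ 2 f) (hg : ContDiff ℝ 2 g) (p : ℝ × ℝ) :
    d12 (fun q => f q - g q) p = d12 f p - d12 g p := by
  rw [d12_eq_iteratedFDeriv hf, d12_eq_iteratedFDeriv hg, d12_eq_iteratedFDeriv (hf.sub hg),
    ← Pi.sub_def, iteratedFDeriv_sub_apply hf.contDiffAt hg.contDiffAt]
  rfl

lemma bddAbove_C2norm_set {f : ℝ × ℝ → ℝ} (hf : ContDiff ℝ 2 f) (T : ℝ) :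
    BddAbove {y : ℝ | ∃ k : ℕ, k ≤ 2 ∧ ∃ p ∈ Set.Icc (0:ℝ) T ×ˢ Set.Icc (0:ℝ) T,
      y = ‖iteratedFDeriv ℝ k f p‖} := by
  have hK : IsCompact (Set.Icc (0:ℝ) T ×ˢ Set.Icc (0:ℝ) T) := isCompact_Icc.prod isCompact_Icc
  have hset : {y : ℝ | ∃ k : ℕ, k ≤ 2 ∧ ∃ p ∈ Set.Icc (0:ℝ) T ×ˢ Set.Icc (0:ℝ) T,
      y = ‖iteratedFDeriv ℝ k f p‖} =
      ⋃ k ∈ Set.Iic 2, (fun p => ‖iteratedFDeriv ℝ k f p‖) '' (Set.Icc 0 T ×ˢ Set.Icc 0 T) := by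
    ext y
    simp [eq_comm]
  rw [hset]
  refine (Set.finite_Iic 2).bddAbove_biUnion.2 fun k hk => ?_
  exact (hK.image (hf.continuous_iteratedFDeriv (by exact_mod_cast hk)).norm).bddAbove

lemma C2norm_nonneg (f : ℝ × ℝ → ℝ) (T : ℝ) : 0 ≤ C2norm f T :=
  Real.sSup_nonneg fun _ ⟨_, _, _, _, hy⟩ => hy ▸ norm_nonneg _

lemma abs_d12_le_C2norm {f : ℝ × ℝ → ℝ} (hf : ContDiff ℝ 2 f) {T : ℝ} {p : ℝ × ℝ}
    (hp : p ∈ Set.Icc 0 T ×ˢ Set.Icc 0 T) : |d12 f p| ≤ C2norm f T :=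
  (abs_d12_le_norm_iteratedFDeriv hf p).trans
    (le_csSup (bddAbove_C2norm_set hf T) ⟨2, le_rfl, p, hp, rfl⟩)

lemma prod_sub_prod_eq_sum {R : Type*} [CommRing R] : ∀ {n : ℕ} (a b : Fin n → R),
    ∏ i, a i - ∏ i, b i = ∑ k : Fin n,
      (∏ i ∈ univ.filter fun i => i < k, a i) * (∏ j ∈ univ.filter fun j => k < j, b j) *
        (a k - b k)
  | 0, _, _ => by simp
  | n + 1, a, b => by
    have ih := prod_sub_prod_eq_sum (fun i => a i.succ) (fun i => b i.succ)
    simp only [prod_filter, Fin.prod_univ_succ, Fin.sum_univ_succ, Fin.succ_lt_succ_iff,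
      Fin.succ_pos, Fin.not_lt_zero, if_true, if_false, one_mul, prod_const_one, mul_assoc,
      ← mul_sum] at ih ⊢
    rw [← ih]
    ring

lemma norm_prod_sub_prod_le {R : Type*} [NormedCommRing R] [NormOneClass R] {n : ℕ}
    {a b : Fin n → R} {A B D : Fin n → ℝ} (hA : ∀ i, ‖a i‖ ≤ A i) (hB : ∀ i, ‖b i‖ ≤ B i)
    (hD : ∀ i, ‖a i - b i‖ ≤ D i) :
    ‖∏ i, a i - ∏ i, b i‖ ≤ ∑ k : Fin n,
      (∏ i ∈ univ.filter fun i => i < k, A i) * (∏ j ∈ univ.filter fun j => k < j, B j) * D k := by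
  have hA0 : ∀ s : Finset (Fin n), 0 ≤ ∏ i ∈ s, A i :=
    fun s => prod_nonneg fun i _ => (norm_nonneg _).trans (hA i)
  rw [prod_sub_prod_eq_sum]
  refine (norm_sum_le _ _).trans (sum_le_sum fun k _ => ?_)
  refine (norm_mul_le _ _).trans (mul_le_mul ?_ (hD k) (norm_nonneg _)
    (mul_nonneg (hA0 _) (prod_nonneg fun j _ => (norm_nonneg _).trans (hB j))))
  refine (norm_mul_le _ _).trans (mul_le_mul ?_ ?_ (norm_nonneg _) (hA0 _)) <;>
    refine (Finset.norm_prod_le _ _).trans (prod_le_prod (fun _ _ => norm_nonneg _) fun i _ => ?_)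
  exacts [hA i, hB i]

lemma simplex_eq_pi_inter (a b : ℝ) (n : ℕ) :
    simplex a b n = Set.univ.pi (fun _ => Set.Icc a b) ∩ {r | Monotone r} := by
  ext r
  simp only [simplex, Set.mem_ofPred_eq, Set.mem_inter_iff, Set.mem_univ_pi, Set.mem_Icc,
    Monotone]

lemma isCompact_simplex (a b : ℝ) (n : ℕ) : IsCompact (simplex a b n) := by
  rw [simplex_eq_pi_inter]
  exact (isCompact_univ_pi fun _ => isCompact_Icc).inter_right isClosed_monotone

lemma measurePreserving_comp_perm {n : ℕ} (σ : Equiv.Perm (Fin n)) :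
    MeasurePreserving (fun r : Fin n → ℝ => r ∘ σ) := by
  have h := volume_measurePreserving_piCongrLeft (fun _ : Fin n => ℝ) σ.symm
  have he : ⇑(MeasurableEquiv.piCongrLeft (fun _ : Fin n => ℝ) σ.symm) = fun r => r ∘ σ := by
    ext r i
    simpa [MeasurableEquiv.coe_piCongrLeft] using
      Equiv.piCongrLeft_apply_apply (fun _ : Fin n => ℝ) σ.symm r (σ i)
  rwa [he] at h

lemma volume_setOf_apply_eq_apply {n : ℕ} {i j : Fin n} (hij : i ≠ j) :
    volume {r : Fin n → ℝ | r i = r j} = 0 := by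
  let s : Submodule ℝ (Fin n → ℝ) :=
    LinearMap.ker ((LinearMap.proj i : (Fin n → ℝ) →ₗ[ℝ] ℝ) - LinearMap.proj j)
  have hs : s ≠ ⊤ := fun h => by
    have : Pi.single i (1 : ℝ) ∈ s := h ▸ Submodule.mem_top
    simp [s, hij] at this
  convert Measure.addHaar_submodule volume s hs using 2
  ext r
  simp [s, sub_eq_zero]

lemma aedisjoint_preimage_comp_perm_simplex (a b : ℝ) {n : ℕ} {σ π : Equiv.Perm (Fin n)}
    (hσπ : σ ≠ π) :
    AEDisjoint volume ((· ∘ σ) ⁻¹' simplex a b n) ((· ∘ π) ⁻¹' simplex a b n) := by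
  refine measure_mono_null (fun r ⟨hσ, hπ⟩ => ?_) (measure_iUnion_null fun i =>
    measure_iUnion_null fun j => measure_iUnion_null fun (hij : i ≠ j) =>
      volume_setOf_apply_eq_apply hij)
  by_contra hr
  simp only [Set.mem_iUnion, not_exists] at hr
  have hinj : Function.Injective r := fun i j h => not_not.1 fun hij => hr i j hij h
  exact hσπ (Equiv.ext fun i => hinj (congrFun (Tuple.unique_monotone hσ.2 hπ.2) i))

lemma factorial_mul_volume_simplex_le (a b : ℝ) (n : ℕ) :
    n ! * volume (simplex a b n) ≤ ENNReal.ofReal (b - a) ^ n := by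
  have hm := (isCompact_simplex a b n).isClosed.measurableSet
  calc (n ! : ℝ≥0∞) * volume (simplex a b n)
      = ∑ σ : Equiv.Perm (Fin n), volume ((· ∘ σ) ⁻¹' simplex a b n) := by
        simp [(measurePreserving_comp_perm _).measure_preimage hm.nullMeasurableSet,
          Fintype.card_perm]
    _ = volume (⋃ σ : Equiv.Perm (Fin n), (· ∘ σ) ⁻¹' simplex a b n) := by
        rw [measure_iUnion₀ (fun σ π => aedisjoint_preimage_comp_perm_simplex a b)
          fun σ => hm.preimage (measurePreserving_comp_perm σ).measurable |>.nullMeasurableSet,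
          tsum_fintype]
    _ ≤ volume (Set.univ.pi fun _ : Fin n => Set.Icc a b) :=
        measure_mono (Set.iUnion_subset fun σ r hr k _ => by simpa using hr.1 (σ.symm k))
    _ = ENNReal.ofReal (b - a) ^ n := by rw [volume_pi_pi]; simp [Real.volume_Icc]

lemma measureReal_simplex_le {a b : ℝ} (hab : a ≤ b) (n : ℕ) :
    volume.real (simplex a b n) ≤ (b - a) ^ n / n ! := by
  rw [le_div_iff₀ (by positivity), mul_comm]
  calc n ! * volume.real (simplex a b n) = (n ! * volume (simplex a b n)).toReal := by
        simp [measureReal_def]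
    _ ≤ (ENNReal.ofReal (b - a) ^ n).toReal :=
        ENNReal.toReal_mono (by finiteness) (factorial_mul_volume_simplex_le a b n)
    _ = (b - a) ^ n := by simp [ENNReal.toReal_ofReal (sub_nonneg.2 hab)]

lemma measureReal_simplex2_le {s1 t1 s2 t2 : ℝ} (h1 : s1 ≤ t1) (h2 : s2 ≤ t2) (n : ℕ) :
    volume.real (simplex2 s1 t1 s2 t2 n) ≤ (t1 - s1) ^ n / n ! * ((t2 - s2) ^ n / n !) := by
  rw [show simplex2 s1 t1 s2 t2 n = simplex s1 t1 n ×ˢ simplex s2 t2 n from rfl,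
    Measure.volume_eq_prod, measureReal_prod_prod]
  exact mul_le_mul (measureReal_simplex_le h1 n) (measureReal_simplex_le h2 n)
    measureReal_nonneg (by positivity)

lemma abs_d12_sub_d12_le_C2norm {f g : ℝ × ℝ → ℝ} (hf : ContDiff ℝ 2 f) (hg : ContDiff ℝ 2 g)
    {T : ℝ} {p : ℝ × ℝ} (hp : p ∈ Set.Icc 0 T ×ˢ Set.Icc 0 T) :
    |d12 f p - d12 g p| ≤ C2norm (fun q => f q - g q) T :=
  d12_sub hf hg p ▸ abs_d12_le_C2norm (hf.sub hg) hp

theorem stmt10_general {d : ℕ} (T : ℝ) (X Xt : Fin d → ℝ × ℝ → ℝ)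
    (hX : ∀ i, ContDiff ℝ 2 (X i)) (hXt : ∀ i, ContDiff ℝ 2 (Xt i))
    {n : ℕ} (w : Fin n → Fin d) (τ : Equiv.Perm (Fin n))
    (s1 s2 t1 t2 : ℝ) (hs1 : 0 ≤ s1) (h1 : s1 ≤ t1) (ht1 : t1 ≤ T)
    (hs2 : 0 ≤ s2) (h2 : s2 ≤ t2) (ht2 : t2 ≤ T) :
    |sigFull X s1 s2 t1 t2 w τ - sigFull Xt s1 s2 t1 t2 w τ| ≤
      T ^ (2 * n) / (n.factorial : ℝ) ^ 2 *
        ∑ k : Fin n,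
          (∏ i ∈ Finset.univ.filter fun i : Fin n => i < k, C2norm (X (w i)) T) *
          (∏ j ∈ Finset.univ.filter fun j : Fin n => k < j, C2norm (Xt (w j)) T) *
          C2norm (fun p => X (w k) p - Xt (w k) p) T := by
  have hS : IsCompact (simplex2 s1 t1 s2 t2 n) :=
    (isCompact_simplex s1 t1 n).prod (isCompact_simplex s2 t2 n)
  have hint : ∀ Y : Fin d → ℝ × ℝ → ℝ, (∀ i, ContDiff ℝ 2 (Y i)) →
      IntegrableOn (fun p => ∏ i, d12 (Y (w i)) (p.1 i, p.2 (τ i))) (simplex2 s1 t1 s2 t2 n) :=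
    fun Y hY => (continuous_finsetProd _ fun i _ => (continuous_d12 (hY _)).comp
      (by fun_prop)).continuousOn.integrableOn_compact hS
  have hmem : ∀ p ∈ simplex2 s1 t1 s2 t2 n, ∀ i, (p.1 i, p.2 (τ i)) ∈ Set.Icc 0 T ×ˢ Set.Icc 0 T :=
    fun p hp i => ⟨⟨hs1.trans (hp.1.1 i).1, (hp.1.1 i).2.trans ht1⟩,
      ⟨hs2.trans (hp.2.1 (τ i)).1, (hp.2.1 (τ i)).2.trans ht2⟩⟩
  have hvol : volume.real (simplex2 s1 t1 s2 t2 n) ≤ T ^ (2 * n) / (n ! : ℝ) ^ 2 := by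
    refine (measureReal_simplex2_le h1 h2 n).trans ?_
    rw [pow_mul', sq, sq, mul_div_mul_comm]
    have hT : 0 ≤ T := hs1.trans (h1.trans ht1)
    gcongr <;> linarith
  rw [sigFull, sigFull, ← integral_sub (hint X hX) (hint Xt hXt), ← Real.norm_eq_abs, mul_comm]
  refine (norm_setIntegral_le_of_norm_le_const hS.measure_lt_top fun p hp =>
    norm_prod_sub_prod_le (fun i => abs_d12_le_C2norm (hX _) (hmem p hp i))
      (fun i => abs_d12_le_C2norm (hXt _) (hmem p hp i))
      (fun i => abs_d12_sub_d12_le_C2norm (hX _) (hXt _) (hmem p hp i))).trans ?_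
  exact mul_le_mul_of_nonneg_left hvol (sum_nonneg fun k _ => mul_nonneg (mul_nonneg
    (prod_nonneg fun _ _ => C2norm_nonneg _ _) (prod_nonneg fun _ _ => C2norm_nonneg _ _))
    (C2norm_nonneg _ _))

/-- local Lipschitz estimate for the full 2D signature in the `C²` norm. -/
theorem stmt10 {d : ℕ} (T : ℝ) (hT : 0 ≤ T) (X Xt : Fin d → ℝ × ℝ → ℝ)
    (hX : ∀ i, ContDiff ℝ 2 (X i)) (hXt : ∀ i, ContDiff ℝ 2 (Xt i))
    {n : ℕ} (w : Fin n → Fin d) (τ : Equiv.Perm (Fin n))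
    (s1 s2 t1 t2 : ℝ) (hs1 : 0 ≤ s1) (h1 : s1 ≤ t1) (ht1 : t1 ≤ T)
    (hs2 : 0 ≤ s2) (h2 : s2 ≤ t2) (ht2 : t2 ≤ T) :
    |sigFull X s1 s2 t1 t2 w τ - sigFull Xt s1 s2 t1 t2 w τ| ≤
      T ^ (2 * n) / (n.factorial : ℝ) ^ 2 *
        ∑ k : Fin n,
          (∏ i ∈ Finset.univ.filter fun i : Fin n => i < k, C2norm (X (w i)) T) *
          (∏ j ∈ Finset.univ.filter fun j : Fin n => k < j, C2norm (Xt (w j)) T) *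
          C2norm (fun p => X (w k) p - Xt (w k) p) T :=
  stmt10_general T X Xt hX hXt w τ s1 s2 t1 t2 hs1 h1 ht1 hs2 h2 ht2
end

section
/- Let $\mathcal{F}$ be the $\mathbb{R}$-algebra of functions on $[0,1]^2$ spanned by $(s_1,s_2)\mapsto s_1^{2m+n}s_2^{2n+m}$ for $m,n \ge 0$. Then $\mathcal{F}$ is dense (in the supremum norm) in the space $V = \{f \in C([0,1]^2;\mathbb{R}) : f(0,s_2) = f(s_1,0) = 0 \text{ for all } s_1, s_2 \in [0,1]\}$ of continuous functions vanishing on the bottom and left boundary. -/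
/-!
Writing `u = s₁ s₂²` and `w = s₁² s₂`, the monomial `s₁^(2m+n) s₂^(2n+m)` is `uⁿ wᵐ`, so the
functions in question are exactly the polynomials in `(u, w)`. The map `s ↦ (u, w)` is injective
off the axes (since `uw = (s₁s₂)³` recovers `s₁s₂`) and collapses both axes to the origin, so a
continuous function vanishing on the axes factors continuously through it on the compact square.
Stone–Weierstrass for polynomials on the compact image then finishes the proof.
-/

open Set MvPolynomial

theorem Finset.exists_fin_sum_eq {α β : Type*} [AddCommMonoid β] (s : Finset α) :
    ∃ (N : ℕ) (e : Fin N → α), ∀ F : α → β, ∑ j, F (e j) = ∑ a ∈ s, F a :=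
  ⟨s.card, fun j => s.equivFin.symm j, fun F =>
    (Equiv.sum_comp s.equivFin.symm fun a => F a).trans (s.sum_coe_sort F)⟩

theorem IsCompact.exists_continuousMap_image_comp_eq {X Y Z : Type*} [TopologicalSpace X]
    [TopologicalSpace Y] [T2Space Y] [TopologicalSpace Z] {K : Set X} (hK : IsCompact K)
    {φ : X → Y} (hφ : ContinuousOn φ K) {f : X → Z} (hf : ContinuousOn f K)
    (hfφ : ∀ p ∈ K, ∀ q ∈ K, φ p = φ q → f p = f q) :
    ∃ g : C(φ '' K, Z), ∀ p (hp : p ∈ K), g ⟨φ p, mem_image_of_mem φ hp⟩ = f p := by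
  choose σ hσK hσφ using fun y : φ '' K => y.2
  have hfσ (p) (hp : p ∈ K) : f (σ ⟨φ p, mem_image_of_mem φ hp⟩) = f p :=
    hfφ _ (hσK _) _ hp (hσφ _)
  refine ⟨⟨f ∘ σ, continuous_iff_isClosed.mpr fun C hC => ?_⟩, hfσ⟩
  obtain ⟨D, hD, hDK⟩ := continuousOn_iff_isClosed.mp hf C hC
  have hpre : f ∘ σ ⁻¹' C = Subtype.val ⁻¹' (φ '' (D ∩ K)) := by
    ext ⟨y, p, hp, rfl⟩
    simp only [mem_preimage, Function.comp_apply, hfσ p hp, mem_image]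
    constructor
    · intro hpC
      exact ⟨p, hDK ▸ ⟨hpC, hp⟩, rfl⟩
    · rintro ⟨q, hq, hqp⟩
      have hqC : q ∈ f ⁻¹' C ∩ K := hDK ▸ hq
      exact hfφ q hq.2 p hp hqp ▸ hqC.1
  rw [hpre]
  exact ((hK.inter_left hD).image_of_continuousOn (hφ.mono inter_subset_right)).isClosed.preimage
    continuous_subtype_val

theorem exists_mvPolynomial_near_of_isCompact {σ : Type*} {Y : Set (σ → ℝ)} (hY : IsCompact Y)
    (g : C(Y, ℝ)) {ε : ℝ} (hε : 0 < ε) :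
    ∃ P : MvPolynomial σ ℝ, ∀ y : Y, |g y - eval (y : σ → ℝ) P| < ε := by
  have : CompactSpace Y := isCompact_iff_compactSpace.mp hY
  let coord (i : σ) : C(Y, ℝ) :=
    ⟨fun y => (y : σ → ℝ) i, (continuous_apply i).comp continuous_subtype_val⟩
  have hsep : (aeval (R := ℝ) coord).range.SeparatesPoints := by
    intro y y' hne
    obtain ⟨i, hi⟩ := Function.ne_iff.mp (Subtype.coe_ne_coe.mpr hne)
    exact ⟨coord i, ⟨coord i, ⟨X i, aeval_X coord i⟩, rfl⟩, hi⟩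
  obtain ⟨⟨_, P, rfl⟩, hP⟩ :=
    ContinuousMap.exists_mem_subalgebra_near_continuous_of_separatesPoints _ hsep g g.continuous ε hε
  refine ⟨P, fun y => ?_⟩
  have heval : aeval coord P y = eval (y : σ → ℝ) P := by
    rw [← ContinuousMap.evalAlgHom_apply ℝ, comp_aeval_apply]
    rfl
  rw [abs_sub_comm, ← heval]
  exact hP y

def collapseAxes (s : ℝ × ℝ) : Fin 2 → ℝ := ![s.1 * s.2 ^ 2, s.1 ^ 2 * s.2]

theorem continuous_collapseAxes : Continuous collapseAxes := by
  unfold collapseAxes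
  fun_prop

theorem mul_eq_mul_of_collapseAxes_eq {s t : ℝ × ℝ} (h : collapseAxes s = collapseAxes t) :
    s.1 * s.2 = t.1 * t.2 := by
  have h0 := congrFun h 0
  have h1 := congrFun h 1
  simp only [collapseAxes, Matrix.cons_val_zero, Matrix.cons_val_one] at h0 h1
  apply (Odd.strictMono_pow (R := ℝ) (by decide : Odd 3)).injective
  calc (s.1 * s.2) ^ 3 = (s.1 * s.2 ^ 2) * (s.1 ^ 2 * s.2) := by ring
    _ = (t.1 * t.2 ^ 2) * (t.1 ^ 2 * t.2) := by rw [h0, h1]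
    _ = (t.1 * t.2) ^ 3 := by ring

theorem eq_of_collapseAxes_eq {s t : ℝ × ℝ} (h : collapseAxes s = collapseAxes t)
    (hs : s.1 * s.2 ≠ 0) : s = t := by
  have hst := mul_eq_mul_of_collapseAxes_eq h
  have h0 := congrFun h 0
  have h1 := congrFun h 1
  simp only [collapseAxes, Matrix.cons_val_zero, Matrix.cons_val_one] at h0 h1
  refine Prod.ext (mul_right_cancel₀ hs ?_) (mul_right_cancel₀ hs ?_)
  · calc s.1 * (s.1 * s.2) = s.1 ^ 2 * s.2 := by ring
      _ = t.1 * (t.1 * t.2) := by rw [h1]; ring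
      _ = t.1 * (s.1 * s.2) := by rw [hst]
  · calc s.2 * (s.1 * s.2) = s.1 * s.2 ^ 2 := by ring
      _ = t.2 * (t.1 * t.2) := by rw [h0]; ring
      _ = t.2 * (s.1 * s.2) := by rw [hst]

theorem apply_eq_apply_of_collapseAxes_eq {K : Set (ℝ × ℝ)} {f : ℝ × ℝ → ℝ}
    (hf0 : ∀ s ∈ K, s.1 * s.2 = 0 → f s = 0) :
    ∀ s ∈ K, ∀ t ∈ K, collapseAxes s = collapseAxes t → f s = f t := by
  intro s hs t ht h
  by_cases hs0 : s.1 * s.2 = 0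
  · rw [hf0 s hs hs0, hf0 t ht (mul_eq_mul_of_collapseAxes_eq h ▸ hs0)]
  · rw [eq_of_collapseAxes_eq h hs0]

theorem eval_collapseAxes (P : MvPolynomial (Fin 2) ℝ) (s : ℝ × ℝ) :
    eval (collapseAxes s) P =
      ∑ d ∈ P.support, coeff d P * s.1 ^ (2 * d 1 + d 0) * s.2 ^ (2 * d 0 + d 1) := by
  rw [eval_eq']
  refine Finset.sum_congr rfl fun d _ => ?_
  simp only [collapseAxes, Fin.prod_univ_two, Matrix.cons_val_zero, Matrix.cons_val_one]
  ring

/-- the algebra spanned by the monomials `(s₁,s₂) ↦ s₁^{2m+k} s₂^{2k+m}`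
(equivalently, its linear span, since it is closed under products) is dense in the sup
norm in the space of continuous functions on `[0,1]²` vanishing on the bottom and left
boundary. -/
theorem stmt18 (f : ℝ × ℝ → ℝ)
    (hf : ContinuousOn f (Set.Icc (0:ℝ) 1 ×ˢ Set.Icc (0:ℝ) 1))
    (hf0 : ∀ s ∈ Set.Icc (0:ℝ) 1, f (0, s) = 0 ∧ f (s, 0) = 0)
    (ε : ℝ) (hε : 0 < ε) :
    ∃ (N : ℕ) (c : Fin N → ℝ) (m k : Fin N → ℕ),
      ∀ p ∈ Set.Icc (0:ℝ) 1 ×ˢ Set.Icc (0:ℝ) 1,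
        |f p - ∑ j, c j * p.1 ^ (2 * m j + k j) * p.2 ^ (2 * k j + m j)| < ε := by
  set K := Set.Icc (0:ℝ) 1 ×ˢ Set.Icc (0:ℝ) 1
  have hK : IsCompact K := isCompact_Icc.prod isCompact_Icc
  have hf_axes : ∀ s ∈ K, s.1 * s.2 = 0 → f s = 0 := by
    rintro ⟨s₁, s₂⟩ ⟨hs₁, hs₂⟩ hs
    rcases mul_eq_zero.mp hs with rfl | rfl
    exacts [(hf0 s₂ hs₂).1, (hf0 s₁ hs₁).2]
  obtain ⟨g, hg⟩ := hK.exists_continuousMap_image_comp_eq continuous_collapseAxes.continuousOn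
    hf (apply_eq_apply_of_collapseAxes_eq hf_axes)
  obtain ⟨P, hP⟩ := exists_mvPolynomial_near_of_isCompact (hK.image continuous_collapseAxes) g hε
  obtain ⟨N, d, hd⟩ := P.support.exists_fin_sum_eq (β := ℝ)
  refine ⟨N, fun j => coeff (d j) P, fun j => d j 1, fun j => d j 0, fun p hp => ?_⟩
  rw [hd fun e => coeff e P * p.1 ^ (2 * e 1 + e 0) * p.2 ^ (2 * e 0 + e 1),
    ← eval_collapseAxes, ← hg p hp]
  exact hP _
end
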